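/- A set C of vertices of Q_n is a cell of an equitable 2-partition of Q_n if and only if there exists an integer k such that all nonzero Fourier coefficients χ̂_C(y) of its characteristic function with y ≠ 0̄ have wt(y) = k. -/
import Mathlib


/-- Fourier coefficient of the characteristic function of C ⊆ {0,1}^n. -/
noncomputable def chat {n : ℕ} (C : Finset (Fin n → Fin 2)) (y : Fin n → Fin 2) : ℝ :=
  (∑ x ∈ C, (-1 : ℝ) ^ (∑ i, (y i).val * (x i).val)) / 2 ^ n

/-- Hamming weight of a binary word. -/
def wt {n : ℕ} (x : Fin n → Fin 2) : ℕ :=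
  (Finset.univ.filter (fun i => x i = 1)).card

open Finset

namespace EqAux
variable {n : ℕ}

def flp (v : Fin n → Fin 2) (i : Fin n) : Fin n → Fin 2 := Function.update v i (v i + 1)

noncomputable def ch (y v : Fin n → Fin 2) : ℝ := (-1) ^ (∑ i, (y i).val * (v i).val)

lemma flp_same (v : Fin n → Fin 2) (i : Fin n) : flp v i i = v i + 1 :=
  Function.update_self _ _ _

lemma flp_ne (v : Fin n → Fin 2) (i : Fin n) {j : Fin n} (h : j ≠ i) : flp v i j = v j :=
  Function.update_of_ne h _ _

lemma ch_sq (y v : Fin n → Fin 2) : ch y v * ch y v = 1 := by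
  unfold ch; rw [← pow_add]; exact Even.neg_one_pow ⟨_, rfl⟩

lemma ch_flp (y v : Fin n → Fin 2) (i : Fin n) :
    ch y (flp v i) = (-1) ^ (y i).val * ch y v := by
  have key : ch y (flp v i) * ch y v = (-1) ^ (y i).val := by
    unfold ch
    rw [← pow_add]
    have hsum : (∑ j, (y j).val * ((flp v i) j).val) + (∑ j, (y j).val * (v j).val)
        = (y i).val + 2 * (∑ j ∈ univ.erase i, (y j).val * (v j).val) := by
      rw [← Finset.sum_add_distrib, ← Finset.add_sum_erase _ _ (mem_univ i)]
      congr 1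
      · rw [flp_same]
        have : ∀ s t : Fin 2, s.val * (t + 1).val + s.val * t.val = s.val := by decide
        exact this _ _
      · rw [Finset.mul_sum]
        refine Finset.sum_congr rfl fun j hj => ?_
        rw [flp_ne v i (mem_erase.mp hj).1]
        ring
    rw [hsum, pow_add, pow_mul]
    norm_num
  calc ch y (flp v i) = ch y (flp v i) * (ch y v * ch y v) := by rw [ch_sq, mul_one]
    _ = (ch y (flp v i) * ch y v) * ch y v := by ring
    _ = (-1) ^ (y i).val * ch y v := by rw [key]

lemma flp_flp (v : Fin n → Fin 2) (i : Fin n) : flp (flp v i) i = v := by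
  funext j
  by_cases h : j = i
  · subst h
    rw [flp_same, flp_same]
    have : ∀ t : Fin 2, t + 1 + 1 = t := by decide
    exact this _
  · rw [flp_ne _ _ h, flp_ne _ _ h]

lemma sum_ch_eq_zero {y : Fin n → Fin 2} (hy : y ≠ fun _ => 0) :
    ∑ v, ch y v = 0 := by
  have hex : ∃ i, y i ≠ 0 := by
    by_contra h
    push_neg at h
    exact hy (funext h)
  obtain ⟨i0, hi0⟩ := hex
  have h1 : (y i0).val = 1 := by
    have := (y i0).isLt
    have h0 : (y i0).val ≠ 0 := fun h => hi0 (Fin.ext h)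
    omega
  apply Finset.sum_involution (fun a _ => flp a i0)
  · intro a ha
    rw [ch_flp, h1, pow_one]
    ring
  · intro a ha _
    intro h
    have := congrFun h i0
    rw [flp_same] at this
    have h2 : ∀ t : Fin 2, t + 1 ≠ t := by decide
    exact h2 _ this
  · intro a ha; exact mem_univ _
  · intro a ha; exact flp_flp a i0

lemma ch_mul (y x v : Fin n → Fin 2) :
    ch y x * ch y v = ch y (fun i => x i + v i) := by
  unfold ch
  rw [← pow_add]
  have key : ∀ s t u : Fin 2,
      s.val * t.val + s.val * u.val = s.val * (t + u).val + 2 * (s.val * t.val * u.val) := by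
    decide
  have hsum : (∑ i, (y i).val * (x i).val) + (∑ i, (y i).val * (v i).val)
      = (∑ i, (y i).val * ((x i + v i)).val) + 2 * ∑ i, (y i).val * (x i).val * (v i).val := by
    rw [← Finset.sum_add_distrib, Finset.mul_sum, ← Finset.sum_add_distrib]
    exact Finset.sum_congr rfl fun i _ => key _ _ _
  rw [hsum, pow_add, pow_mul]
  norm_num

lemma ch_comm (y v : Fin n → Fin 2) : ch y v = ch v y := by
  unfold ch; congr 1; exact Finset.sum_congr rfl fun i _ => Nat.mul_comm _ _

lemma ch_zero_right (y : Fin n → Fin 2) : ch y (fun _ => 0) = 1 := by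
  unfold ch; simp

lemma ch_zero_left (v : Fin n → Fin 2) : ch (fun _ => 0) v = 1 := by
  rw [ch_comm]; exact ch_zero_right v

lemma sum_ch_fst (z : Fin n → Fin 2) :
    ∑ y, ch y z = if z = (fun _ => 0) then (2:ℝ) ^ n else 0 := by
  split_ifs with h
  · subst h
    simp only [ch_zero_right]
    rw [Finset.sum_const, Finset.card_univ]
    simp [Fintype.card_fun]
  · rw [Finset.sum_congr rfl fun y _ => ch_comm y z]
    exact sum_ch_eq_zero h


lemma chat_eq (C : Finset (Fin n → Fin 2)) (y : Fin n → Fin 2) :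
    chat C y = (∑ x ∈ C, ch y x) / 2 ^ n := rfl

lemma sum_ind_ch (C : Finset (Fin n → Fin 2)) (y : Fin n → Fin 2) :
    ∑ v, (if v ∈ C then (1:ℝ) else 0) * ch y v = 2 ^ n * chat C y := by
  rw [chat_eq]
  have h2 : (2:ℝ) ^ n ≠ 0 := by positivity
  rw [mul_div_cancel₀ _ h2]
  rw [Finset.sum_congr rfl (fun v _ => by
    rw [ite_mul, one_mul, zero_mul] :
    ∀ v ∈ (univ : Finset (Fin n → Fin 2)), (if v ∈ C then (1:ℝ) else 0) * ch y v
      = if v ∈ C then ch y v else 0)]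
  rw [Finset.sum_ite_mem, Finset.univ_inter]

lemma inversion (C : Finset (Fin n → Fin 2)) (v : Fin n → Fin 2) :
    (if v ∈ C then (1:ℝ) else 0) = ∑ y, chat C y * ch y v := by
  have h2 : (2:ℝ) ^ n ≠ 0 := by positivity
  have step : ∀ y : Fin n → Fin 2, chat C y * ch y v
      = (∑ x ∈ C, ch y x * ch y v) / 2 ^ n := by
    intro y
    rw [chat_eq, div_mul_eq_mul_div, Finset.sum_mul]
  rw [Finset.sum_congr rfl fun y _ => step y]
  rw [← Finset.sum_div]
  rw [Finset.sum_comm]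
  have inner : ∀ x : Fin n → Fin 2, (∑ y, ch y x * ch y v)
      = if x = v then (2:ℝ) ^ n else 0 := by
    intro x
    rw [Finset.sum_congr rfl fun y _ => ch_mul y x v]
    rw [sum_ch_fst]
    have hiff : ((fun i => x i + v i) = fun _ => 0) ↔ x = v := by
      constructor
      · intro h
        funext i
        have := congrFun h i
        have hk : ∀ s t : Fin 2, s + t = 0 → s = t := by decide
        exact hk _ _ this
      · intro h
        subst h
        funext i
        have : ∀ s : Fin 2, s + s = 0 := by decide
        exact this _
    simp only [hiff]
  rw [Finset.sum_congr rfl fun x _ => inner x]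
  rw [Finset.sum_ite_eq' C v (fun _ => (2:ℝ) ^ n)]
  split_ifs with h <;> simp [h2]

lemma sum_neg_one_pow (y : Fin n → Fin 2) :
    ∑ i, ((-1:ℝ)) ^ (y i).val = (n:ℝ) - 2 * wt y := by
  have hterm : ∀ t : Fin 2, ((-1:ℝ)) ^ t.val = if t = 1 then -1 else 1 := by
    intro t; fin_cases t <;> norm_num
  rw [Finset.sum_congr rfl fun i _ => hterm (y i)]
  rw [Finset.sum_ite, Finset.sum_const, Finset.sum_const]
  have hc := Finset.card_filter_add_card_filter_not
    (s := (univ : Finset (Fin n))) (p := fun i => y i = 1)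
  rw [Finset.card_univ, Fintype.card_fin] at hc
  have hwt : (univ.filter (fun i => y i = 1)).card = wt y := rfl
  rw [hwt] at hc
  have hle : wt y ≤ n := by omega
  have hneg : (univ.filter (fun i => ¬ y i = 1)).card = n - wt y := by omega
  rw [hneg, hwt]
  rw [nsmul_eq_mul, nsmul_eq_mul, Nat.cast_sub hle]
  push_cast
  ring


lemma flp_inj (v : Fin n → Fin 2) : Function.Injective (flp v) := by
  intro i j h
  by_contra hne
  have h1 : flp v i i = v i + 1 := flp_same v i
  have h2 : flp v j i = v i := flp_ne v j (fun hh => hne hh)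
  rw [h] at h1
  rw [h1] at h2
  have : ∀ t : Fin 2, t + 1 ≠ t := by decide
  exact this _ h2

lemma hamming_image (v : Fin n → Fin 2) :
    Finset.univ.filter (fun w => hammingDist v w = 1) = Finset.univ.image (flp v) := by
  ext w
  simp only [mem_filter, mem_univ, true_and, mem_image]
  constructor
  · intro h
    have h' : (univ.filter (fun i => v i ≠ w i)).card = 1 := h
    obtain ⟨i, hi⟩ := Finset.card_eq_one.mp h'
    refine ⟨i, ?_⟩
    · funext j
      by_cases hj : j = i
      · subst hj
        have hji : j ∈ univ.filter (fun i => v i ≠ w i) := by rw [hi]; exact mem_singleton_self j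
        have hne : v j ≠ w j := (mem_filter.mp hji).2
        rw [flp_same]
        have hk : ∀ s t : Fin 2, s ≠ t → s + 1 = t := by decide
        exact hk _ _ hne
      · have hji : j ∉ univ.filter (fun i => v i ≠ w i) := by
          rw [hi]; simp [hj]
        have heq : v j = w j := by
          by_contra hne
          exact hji (mem_filter.mpr ⟨mem_univ j, hne⟩)
        rw [flp_ne _ _ hj, heq]
  · rintro ⟨i, -, rfl⟩
    show (univ.filter (fun j => v j ≠ flp v i j)).card = 1
    have : univ.filter (fun j => v j ≠ flp v i j) = {i} := by
      ext j
      simp only [mem_filter, mem_univ, true_and, mem_singleton]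
      constructor
      · intro h
        by_contra hj
        exact h (flp_ne v i hj).symm
      · rintro rfl
        rw [flp_same]
        have : ∀ t : Fin 2, t ≠ t + 1 := by decide
        exact this _
    rw [this, Finset.card_singleton]

lemma cnt_eq (C : Finset (Fin n → Fin 2)) (v : Fin n → Fin 2) :
    ((C.filter (fun w => hammingDist v w = 1)).card : ℝ)
      = ∑ i, (if flp v i ∈ C then (1:ℝ) else 0) := by
  have hfil : C.filter (fun w => hammingDist v w = 1)
      = (univ.filter (fun w => hammingDist v w = 1)).filter (· ∈ C) := by
    ext w; simp [and_comm]
  rw [hfil, hamming_image, Finset.card_filter]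
  rw [Finset.sum_image (fun i _ j _ h => flp_inj v h)]
  push_cast
  exact Finset.sum_congr rfl fun i _ => by split_ifs <;> norm_num

lemma cnt_total (C : Finset (Fin n → Fin 2)) (v : Fin n → Fin 2) :
    (C.filter (fun w => hammingDist v w = 1)).card
      + (Cᶜ.filter (fun w => hammingDist v w = 1)).card = n := by
  have hfil : C.filter (fun w => hammingDist v w = 1)
      = (univ.filter (fun w => hammingDist v w = 1)).filter (· ∈ C) := by
    ext w; simp [and_comm]
  have hfil' : Cᶜ.filter (fun w => hammingDist v w = 1)
      = (univ.filter (fun w => hammingDist v w = 1)).filter (fun w => ¬ w ∈ C) := by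
    ext w; simp [and_comm]
  rw [hfil, hfil', Finset.card_filter_add_card_filter_not]
  rw [hamming_image, Finset.card_image_of_injective _ (flp_inj v), Finset.card_univ,
    Fintype.card_fin]


lemma forward_key (C : Finset (Fin n → Fin 2)) (a c : ℕ)
    (hC : ∀ v ∈ C, (C.filter (fun w => hammingDist v w = 1)).card = a)
    (hD : ∀ v ∈ Cᶜ, (C.filter (fun w => hammingDist v w = 1)).card = c)
    {y : Fin n → Fin 2} (hy : y ≠ fun _ => 0) (hne : chat C y ≠ 0) :
    (n:ℝ) - 2 * wt y = (a:ℝ) - c := by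
  have key1 : ∀ v, ((C.filter (fun w => hammingDist v w = 1)).card : ℝ)
      = ((a:ℝ) - c) * (if v ∈ C then 1 else 0) + c := by
    intro v
    by_cases hv : v ∈ C
    · rw [hC v hv]; simp [hv]
    · rw [hD v (Finset.mem_compl.mpr hv)]; simp [hv]
  have eq1 : ∑ v, ((C.filter (fun w => hammingDist v w = 1)).card : ℝ) * ch y v
      = ((a:ℝ) - c) * (2 ^ n * chat C y) := by
    rw [(Finset.sum_congr rfl fun v _ => by
      rw [key1 v, add_mul, mul_assoc] :
      _ = ∑ v, (((a:ℝ) - c) * ((if v ∈ C then (1:ℝ) else 0) * ch y v) + (c:ℝ) * ch y v))]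
    rw [Finset.sum_add_distrib, ← Finset.mul_sum, ← Finset.mul_sum,
      sum_ind_ch, sum_ch_eq_zero hy, mul_zero, add_zero]
  have eq2 : ∑ v, ((C.filter (fun w => hammingDist v w = 1)).card : ℝ) * ch y v
      = ((n:ℝ) - 2 * wt y) * (2 ^ n * chat C y) := by
    rw [(Finset.sum_congr rfl fun v _ => by rw [cnt_eq C v, Finset.sum_mul] :
      _ = ∑ v, ∑ i, (if flp v i ∈ C then (1:ℝ) else 0) * ch y v)]
    rw [Finset.sum_comm]
    have inner : ∀ i, (∑ v, (if flp v i ∈ C then (1:ℝ) else 0) * ch y v)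
        = (-1) ^ (y i).val * (2 ^ n * chat C y) := by
      intro i
      have hb : Function.Bijective (fun v : Fin n → Fin 2 => flp v i) :=
        Function.Involutive.bijective (fun v => flp_flp v i)
      rw [Fintype.sum_bijective _ hb _
        (fun u => (if u ∈ C then (1:ℝ) else 0) * ch y (flp u i))
        (fun v => by simp only [flp_flp])]
      rw [(Finset.sum_congr rfl fun u _ => by
        rw [ch_flp, mul_left_comm] :
        _ = ∑ u, (-1:ℝ) ^ (y i).val * ((if u ∈ C then (1:ℝ) else 0) * ch y u))]
      rw [← Finset.mul_sum, sum_ind_ch]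
    rw [Finset.sum_congr rfl fun i _ => inner i, ← Finset.sum_mul, sum_neg_one_pow]
  have h2 : (2:ℝ) ^ n * chat C y ≠ 0 := mul_ne_zero (by positivity) hne
  exact mul_right_cancel₀ h2 (eq2.symm.trans eq1)

lemma wt_zero : wt (fun _ : Fin n => (0 : Fin 2)) = 0 := by
  unfold wt
  rw [Finset.filter_false_of_mem (fun i _ h => absurd h ((by decide : ¬ (0:Fin 2) = 1))), Finset.card_empty]

lemma backward_key (C : Finset (Fin n → Fin 2)) (k : ℕ)
    (hk : ∀ y : Fin n → Fin 2, y ≠ (fun _ => 0) → chat C y ≠ 0 → wt y = k)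
    (v : Fin n → Fin 2) :
    ((C.filter (fun w => hammingDist v w = 1)).card : ℝ)
      = ((n:ℝ) - 2 * k) * (if v ∈ C then 1 else 0) + 2 * k * chat C (fun _ => 0) := by
  rw [cnt_eq]
  rw [Finset.sum_congr rfl fun i _ => inversion C (flp v i)]
  rw [Finset.sum_comm]
  have hin : ∀ y : Fin n → Fin 2, (∑ i, chat C y * ch y (flp v i))
      = chat C y * (((n:ℝ) - 2 * wt y) * ch y v) := by
    intro y
    rw [← Finset.mul_sum]
    congr 1
    rw [Finset.sum_congr rfl fun i _ => ch_flp y v i, ← Finset.sum_mul, sum_neg_one_pow]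
  rw [Finset.sum_congr rfl fun y _ => hin y]
  have split : ∀ y : Fin n → Fin 2, chat C y * (((n:ℝ) - 2 * wt y) * ch y v)
      = ((n:ℝ) - 2 * k) * (chat C y * ch y v)
        + chat C y * ((2 * (k:ℝ) - 2 * wt y) * ch y v) := by
    intro y; ring
  rw [Finset.sum_congr rfl fun y _ => split y, Finset.sum_add_distrib,
    ← Finset.mul_sum, ← inversion]
  congr 1
  rw [Finset.sum_eq_single (fun _ => (0 : Fin 2))]
  · rw [ch_zero_left, wt_zero]
    push_cast
    ring
  · intro y _ hy
    by_cases hcz : chat C y = 0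
    · rw [hcz]; ring
    · rw [hk y hy hcz]; ring
  · intro h; exact absurd (mem_univ _) h

end EqAux

open EqAux in
/-- C is a cell of an equitable 2-partition of Q_n iff all nonzero Fourier
coefficients of its characteristic function at y ≠ 0̄ occur at a single weight k. -/
theorem stmt_12 (n : ℕ) (C : Finset (Fin n → Fin 2)) :
    (∃ a b c d : ℕ,
      (∀ v ∈ C, (C.filter (fun w => hammingDist v w = 1)).card = a ∧
        (Cᶜ.filter (fun w => hammingDist v w = 1)).card = b) ∧
      (∀ v ∈ Cᶜ, (C.filter (fun w => hammingDist v w = 1)).card = c ∧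
        (Cᶜ.filter (fun w => hammingDist v w = 1)).card = d))
    ↔ ∃ k : ℕ, ∀ y : Fin n → Fin 2, y ≠ (fun _ => 0) → chat C y ≠ 0 → wt y = k := by
  constructor
  · rintro ⟨a, b, c, d, hC, hD⟩
    have hC1 : ∀ v ∈ C, (C.filter (fun w => hammingDist v w = 1)).card = a :=
      fun v hv => (hC v hv).1
    have hD1 : ∀ v ∈ Cᶜ, (C.filter (fun w => hammingDist v w = 1)).card = c :=
      fun v hv => (hD v hv).1
    by_cases hex : ∃ y : Fin n → Fin 2, y ≠ (fun _ => 0) ∧ chat C y ≠ 0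
    · obtain ⟨y0, hy0, hc0⟩ := hex
      refine ⟨wt y0, fun y hy hcy => ?_⟩
      have e1 := forward_key C a c hC1 hD1 hy hcy
      have e0 := forward_key C a c hC1 hD1 hy0 hc0
      have : (wt y : ℝ) = (wt y0 : ℝ) := by linarith [e1, e0]
      exact_mod_cast this
    · push_neg at hex
      exact ⟨0, fun y hy hcy => absurd (hex y hy) hcy⟩
  · rintro ⟨k, hk⟩
    have key := backward_key C k hk
    have hCval : ∀ v ∈ C, ((C.filter (fun w => hammingDist v w = 1)).card : ℝ)
        = ((n:ℝ) - 2 * k) + 2 * k * chat C (fun _ => 0) := by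
      intro v hv
      rw [key v, if_pos hv, mul_one]
    have hDval : ∀ v ∈ Cᶜ, ((C.filter (fun w => hammingDist v w = 1)).card : ℝ)
        = 2 * k * chat C (fun _ => 0) := by
      intro v hv
      rw [key v, if_neg (Finset.mem_compl.mp hv), mul_zero, zero_add]
    have constC : ∀ v ∈ C, ∀ w ∈ C,
        (C.filter (fun u => hammingDist v u = 1)).card
          = (C.filter (fun u => hammingDist w u = 1)).card := by
      intro v hv w hw
      have : ((C.filter (fun u => hammingDist v u = 1)).card : ℝ)
          = ((C.filter (fun u => hammingDist w u = 1)).card : ℝ) := by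
        rw [hCval v hv, hCval w hw]
      exact_mod_cast this
    have constD : ∀ v ∈ Cᶜ, ∀ w ∈ Cᶜ,
        (C.filter (fun u => hammingDist v u = 1)).card
          = (C.filter (fun u => hammingDist w u = 1)).card := by
      intro v hv w hw
      have : ((C.filter (fun u => hammingDist v u = 1)).card : ℝ)
          = ((C.filter (fun u => hammingDist w u = 1)).card : ℝ) := by
        rw [hDval v hv, hDval w hw]
      exact_mod_cast this
    rcases C.eq_empty_or_nonempty with hC0 | ⟨v0, hv0⟩
    · have hv1 : (fun _ : Fin n => (0 : Fin 2)) ∈ Cᶜ := by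
        rw [Finset.mem_compl, hC0]; exact Finset.notMem_empty _
      set v1 : Fin n → Fin 2 := fun _ => 0
      refine ⟨0, 0, (C.filter (fun u => hammingDist v1 u = 1)).card,
        (Cᶜ.filter (fun u => hammingDist v1 u = 1)).card, ?_, ?_⟩
      · intro v hv
        rw [hC0] at hv
        exact absurd hv (Finset.notMem_empty v)
      · intro v hv
        have h1 := constD v hv v1 hv1
        refine ⟨h1, ?_⟩
        have t1 := cnt_total C v
        have t2 := cnt_total C v1
        omega
    · rcases Cᶜ.eq_empty_or_nonempty with hD0 | ⟨v1, hv1⟩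
      · refine ⟨(C.filter (fun u => hammingDist v0 u = 1)).card,
          (Cᶜ.filter (fun u => hammingDist v0 u = 1)).card, 0, 0, ?_, ?_⟩
        · intro v hv
          have h1 := constC v hv v0 hv0
          refine ⟨h1, ?_⟩
          have t1 := cnt_total C v
          have t2 := cnt_total C v0
          omega
        · intro v hv
          rw [hD0] at hv
          exact absurd hv (Finset.notMem_empty v)
      · refine ⟨(C.filter (fun u => hammingDist v0 u = 1)).card,
          (Cᶜ.filter (fun u => hammingDist v0 u = 1)).card,
          (C.filter (fun u => hammingDist v1 u = 1)).card,
          (Cᶜ.filter (fun u => hammingDist v1 u = 1)).card, ?_, ?_⟩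
        · intro v hv
          have h1 := constC v hv v0 hv0
          refine ⟨h1, ?_⟩
          have t1 := cnt_total C v
          have t2 := cnt_total C v0
          omega
        · intro v hv
          have h1 := constD v hv v1 hv1
          refine ⟨h1, ?_⟩
          have t1 := cnt_total C v
          have t2 := cnt_total C v1
          omega
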